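/- In the Degree Change Lemma setting, if both deg Λ(x) ≤ deg m(x) − deg r(x) and deg Λ⁽¹⁾(x) < deg m(x) − deg r(x), then the congruence Λ⁽¹⁾(x)r(x) ≡ Λ(x)r⁽¹⁾(x) (mod m(x)) becomes an equality of polynomials: Λ⁽¹⁾(x)r(x) = Λ(x)r⁽¹⁾(x). -/

import Mathlib

/-!
Both `Λ₁ r` and `Λ r₁` are congruent to `b Λ Λ₁` modulo `m`, so `m` divides their difference;
the degree hypotheses put both products below `deg m`, hence the difference vanishes.
-/

open Polynomial

theorem EuclideanDomain.dvd_mul_mod_sub_mul_mod {R : Type*} [EuclideanDomain R] (b m x y : R) :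
    m ∣ y * (b * x % m) - x * (b * y % m) := by
  rw [mod_eq_sub_mul_div, mod_eq_sub_mul_div]
  exact ⟨x * (b * y / m) - y * (b * x / m), by ring⟩

namespace Polynomial

variable {R : Type*} [Semiring R] {p q r m : R[X]}

theorem degree_mul_lt_of_natDegree_add_lt (h : p.natDegree + q.natDegree < m.natDegree) :
    (p * q).degree < m.degree :=
  degree_lt_degree (natDegree_mul_le.trans_lt h)

theorem degree_mul_lt_of_degree_lt_of_natDegree_add_le (hm : m ≠ 0) (hq : q.degree < r.degree)
    (h : p.natDegree + r.natDegree ≤ m.natDegree) : (p * q).degree < m.degree := by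
  rcases eq_or_ne q 0 with rfl | hq₀
  · rw [mul_zero, degree_zero, bot_lt_iff_ne_bot, Ne, degree_eq_bot]
    exact hm
  · exact degree_mul_lt_of_natDegree_add_lt
      ((Nat.add_lt_add_left (natDegree_lt_natDegree hq₀ hq) _).trans_le h)

end Polynomial

theorem congruence_becomes_equality_general {F : Type*} [Field F] (b m Λ Λ₁ r r₁ : F[X])
    (hm : m ≠ 0)
    (hr : r = b * Λ % m) (hr₁ : r₁ = b * Λ₁ % m)
    (hrr : r₁.degree < r.degree)
    (hΛdeg : Λ.natDegree + r.natDegree ≤ m.natDegree)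
    (hΛ₁deg : Λ₁.natDegree + r.natDegree < m.natDegree) :
    Λ₁ * r = Λ * r₁ := by
  have hdvd : m ∣ Λ₁ * r - Λ * r₁ := hr ▸ hr₁ ▸ EuclideanDomain.dvd_mul_mod_sub_mul_mod b m Λ Λ₁
  have hlt : (Λ₁ * r - Λ * r₁).degree < m.degree :=
    (degree_sub_le _ _).trans_lt <| max_lt (degree_mul_lt_of_natDegree_add_lt hΛ₁deg)
      (degree_mul_lt_of_degree_lt_of_natDegree_add_le hm hrr hΛdeg)
  exact sub_eq_zero.mp (eq_zero_of_dvd_of_degree_lt hdvd hlt)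

/-- In the Degree Change Lemma setting, if `deg Λ ≤ deg m − deg r` and
`deg Λ⁽¹⁾ < deg m − deg r`, the congruence `Λ⁽¹⁾r ≡ Λr⁽¹⁾ (mod m)` becomes an
equality of polynomials. -/
theorem congruence_becomes_equality {F : Type*} [Field F] (b m Λ Λ₁ r r₁ : F[X])
    (hb : b ≠ 0) (hm : m ≠ 0) (hdeg : b.degree < m.degree)
    (hΛ : Λ ≠ 0) (hΛ₁ : Λ₁ ≠ 0)
    (hr : r = b * Λ % m) (hr₁ : r₁ = b * Λ₁ % m)
    (hrr : r₁.degree < r.degree)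
    (hΛdeg : Λ.natDegree + r.natDegree ≤ m.natDegree)
    (hΛ₁deg : Λ₁.natDegree + r.natDegree < m.natDegree) :
    Λ₁ * r = Λ * r₁ :=
  congruence_becomes_equality_general b m Λ Λ₁ r r₁ hm hr hr₁ hrr hΛdeg hΛ₁deg
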